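/- arXiv:math/0111293 — 3 statements merged into one kernel-verified Lean document; each statement's English description precedes it below -/
import Mathlib

section
/- Let Z = ∂/∂z̄ + g∂/∂z be elliptic on T² (g smooth, ‖g‖_∞ < 1), u = z − Z⁻¹(g) its distinguished null solution, and suppose additionally conj(Z)u is nowhere zero (Lemma A.1). Set e₁ = u(z+1) − u(z), e₂ = u(z+i) − u(z) (these are well-defined constants). Then e₁, e₂ are R-linearly independent and the induced map [u] : T² → C/L, L = Z e₁ + Z e₂, is a bijection (indeed a diffeomorphism). -/
open MeasureTheory

/-- Wirtinger derivative `∂u/∂z̄ = (∂ₓu + i ∂_y u)/2`. -/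
noncomputable def dbar (u : ℂ → ℂ) (z : ℂ) : ℂ :=
  (fderiv ℝ u z 1 + Complex.I * fderiv ℝ u z Complex.I) / 2

/-- Wirtinger derivative `∂u/∂z = (∂ₓu − i ∂_y u)/2`. -/
noncomputable def dzed (u : ℂ → ℂ) (z : ℂ) : ℂ :=
  (fderiv ℝ u z 1 - Complex.I * fderiv ℝ u z Complex.I) / 2

/-- `ℤ²`-periodicity on `ℂ ≅ ℝ²`. -/
def Per (v : ℂ → ℂ) : Prop := ∀ z : ℂ, v (z + 1) = v z ∧ v (z + Complex.I) = v z

/-- The fundamental square `[0,1) × [0,1)` of the torus. -/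
def Dsq : Set ℂ := {z : ℂ | z.re ∈ Set.Ico (0 : ℝ) 1 ∧ z.im ∈ Set.Ico (0 : ℝ) 1}

namespace IMTB


lemma real_induction {A : Set ℝ} (h0 : (0:ℝ) ∈ A) (hA : A ⊆ Set.Icc 0 1)
    (hstep : ∀ t ∈ Set.Icc (0:ℝ) 1, t ∈ closure A →
      ∃ δ > 0, Set.Icc (0:ℝ) 1 ∩ Set.Icc (t - δ) (t + δ) ⊆ A) : (1:ℝ) ∈ A := by
  have hne : A.Nonempty := ⟨0, h0⟩
  have hbdd : BddAbove A := ⟨1, fun x hx => (hA hx).2⟩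
  set τ := sSup A with hτ
  have hτc : τ ∈ closure A := csSup_mem_closure hne hbdd
  have hτmem : τ ∈ Set.Icc (0:ℝ) 1 := ⟨le_csSup hbdd h0, csSup_le hne fun x hx => (hA hx).2⟩
  obtain ⟨δ, hδ, hsub⟩ := hstep τ hτmem hτc
  rcases eq_or_lt_of_le hτmem.2 with h1 | h1
  · exact hsub ⟨⟨zero_le_one, le_refl 1⟩, ⟨by linarith, by linarith⟩⟩
  · exfalso
    have ht' : min (τ + δ) 1 ∈ A := by
      refine hsub ⟨⟨le_min (by linarith [hτmem.1]) zero_le_one, min_le_right _ _⟩,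
        le_min (by linarith) (by linarith [hτmem.1]), min_le_left _ _⟩
    have h2 : min (τ + δ) 1 ≤ τ := le_csSup hbdd ht'
    have h3 : τ < min (τ + δ) 1 := lt_min (by linarith) h1
    linarith

/-- A "sheet" over a ball around `u z`, containing `z`: an open set on which `u` is
a homeomorphism onto the ball, and which is relatively clopen in the preimage of
the ball (so connected subsets of the preimage meeting it are contained in it). -/
lemma exists_sheet (u : ℂ → ℂ) (hu : Continuous u)
    (hloc : ∀ z : ℂ, ∃ Φ : OpenPartialHomeomorph ℂ ℂ, z ∈ Φ.source ∧ ∀ w ∈ Φ.source, Φ w = u w)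
    (z : ℂ) :
    ∃ ε > 0, ∃ U : Set ℂ, ∃ ψ : ℂ → ℂ, IsOpen U ∧ z ∈ U ∧
      (∀ w ∈ U, u w ∈ Metric.ball (u z) ε) ∧
      ContinuousOn ψ (Metric.ball (u z) ε) ∧
      (∀ y ∈ Metric.ball (u z) ε, ψ y ∈ U ∧ u (ψ y) = y) ∧
      (∀ w ∈ U, ψ (u w) = w) ∧
      (∀ C : Set ℂ, C ⊆ u ⁻¹' (Metric.ball (u z) ε) → IsPreconnected C →
        (C ∩ U).Nonempty → C ⊆ U) := by
  obtain ⟨Φ, hzs, hΦu⟩ := hloc z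
  have hzt : Φ z ∈ Φ.target := Φ.map_source hzs
  obtain ⟨ε, hε, hball⟩ := Metric.isOpen_iff.1 Φ.open_target (Φ z) hzt
  have huz : Φ z = u z := hΦu z hzs
  rw [huz] at hball
  set B := Metric.ball (u z) ε with hB
  set U := Φ.source ∩ Φ ⁻¹' B with hU
  have hUopen : IsOpen U := Φ.isOpen_inter_preimage Metric.isOpen_ball
  have hzU : z ∈ U := ⟨hzs, by simp [hB, huz, hε]⟩
  have hmemball : ∀ w ∈ U, u w ∈ B := by
    intro w hw
    have := hw.2
    rwa [Set.mem_preimage, hΦu w hw.1] at this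
  set ψ : ℂ → ℂ := ⇑Φ.symm with hψ
  have hψU : ∀ y ∈ B, ψ y ∈ U ∧ u (ψ y) = y := by
    intro y hy
    have hyt : y ∈ Φ.target := hball hy
    have hs : ψ y ∈ Φ.source := Φ.map_target hyt
    have : Φ (ψ y) = y := Φ.right_inv hyt
    refine ⟨⟨hs, ?_⟩, by rw [← hΦu _ hs]; exact this⟩
    rw [Set.mem_preimage, this]; exact hy
  have hψu : ∀ w ∈ U, ψ (u w) = w := by
    intro w hw
    rw [← hΦu w hw.1]
    exact Φ.left_inv hw.1
  refine ⟨ε, hε, U, ψ, hUopen, hzU, hmemball, (Φ.symm.continuousOn).mono ?_, hψU, hψu, ?_⟩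
  · intro y hy; exact hball hy
  · -- relative clopenness
    intro C hCsub hCconn hCne
    -- W := points of preimage of B not in U, is open
    set W := {w : ℂ | u w ∈ B ∧ w ∉ U} with hW
    have hWopen : IsOpen W := by
      rw [Metric.isOpen_iff]
      rintro w ⟨hwB, hwU⟩
      set w' := ψ (u w) with hw'
      have hw'mem := hψU (u w) hwB
      have hne : w' ≠ w := by
        intro h
        exact hwU (h ▸ hw'mem.1)
      have hd : 0 < dist w w' := dist_pos.2 (Ne.symm hne)
      -- continuity of ψ ∘ u at w
      have hcont : ContinuousAt (fun x => ψ (u x)) w := by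
        have h1 : ContinuousAt ψ (u w) :=
          (Φ.symm.continuousOn).continuousAt (Φ.open_target.mem_nhds (hball hwB))
        exact h1.comp hu.continuousAt
      have hlim : Filter.Tendsto (fun x => ψ (u x)) (nhds w) (nhds w') := hcont
      have h2 : ∀ᶠ x in nhds w, dist (ψ (u x)) w' < dist w w' / 2 := by
        have := Metric.tendsto_nhds.1 hlim (dist w w' / 2) (by linarith)
        exact this
      have h3 : ∀ᶠ x in nhds w, u x ∈ B := by
        have : IsOpen (u ⁻¹' B) := Metric.isOpen_ball.preimage hu
        exact this.mem_nhds hwB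
      have h4 : ∀ᶠ x in nhds w, dist x w < dist w w' / 2 := by
        have := Metric.tendsto_nhds.1 (Filter.tendsto_id (x := nhds w)) (dist w w' / 2) (by linarith)
        exact this
      obtain ⟨r, hr, hrsub⟩ := Metric.eventually_nhds_iff_ball.1 ((h2.and h3).and h4)
      refine ⟨r, hr, ?_⟩
      intro x hx
      obtain ⟨⟨hx2, hx3⟩, hx4⟩ := hrsub x hx
      refine ⟨hx3, ?_⟩
      intro hxU
      have : ψ (u x) = x := hψu x hxU
      rw [this] at hx2
      have : dist w w' ≤ dist w x + dist x w' := dist_triangle _ _ _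
      rw [dist_comm w x] at this
      linarith
    have hdisj : Disjoint U W := by
      rw [Set.disjoint_iff]
      rintro x ⟨hxU, hxW⟩
      exact (hxW.2 hxU).elim
    have hcover : C ⊆ U ∪ W := by
      intro c hc
      by_cases h : c ∈ U
      · exact Or.inl h
      · exact Or.inr ⟨hCsub hc, h⟩
    rcases hCconn.subset_or_subset hUopen hWopen hdisj hcover with h | h
    · exact h
    · exfalso
      obtain ⟨x, hxC, hxU⟩ := hCne
      exact (h hxC).2 hxU

lemma exists_lift (u : ℂ → ℂ) (hu : Continuous u)
    (hloc : ∀ z : ℂ, ∃ Φ : OpenPartialHomeomorph ℂ ℂ, z ∈ Φ.source ∧ ∀ w ∈ Φ.source, Φ w = u w)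
    (hproper : ∀ K : Set ℂ, IsCompact K → IsCompact (u ⁻¹' K))
    (hsep : IsSeparatedMap u) (hinj : IsLocallyInjective u)
    (σ : ℝ → ℂ) (hσ : Continuous σ) (z₀ : ℂ) (h0 : u z₀ = σ 0) :
    ∃ γ : ℝ → ℂ, ContinuousOn γ (Set.Icc 0 1) ∧ γ 0 = z₀ ∧
      ∀ t ∈ Set.Icc (0:ℝ) 1, u (γ t) = σ t := by
  classical
  set P : ℝ → (ℝ → ℂ) → Prop := fun t γ => ContinuousOn γ (Set.Icc 0 t) ∧ γ 0 = z₀ ∧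
    ∀ s ∈ Set.Icc (0:ℝ) t, u (γ s) = σ s with hP
  set A : Set ℝ := {t | t ∈ Set.Icc (0:ℝ) 1 ∧ ∃ γ, P t γ} with hAdef
  -- A is downward closed
  have hdc : ∀ t ∈ A, ∀ s, 0 ≤ s → s ≤ t → s ∈ A := by
    rintro t ⟨ht1, γ, hγ⟩ s hs0 hst
    exact ⟨⟨hs0, le_trans hst ht1.2⟩, γ, hγ.1.mono (Set.Icc_subset_Icc le_rfl hst), hγ.2.1,
      fun x hx => hγ.2.2 x ⟨hx.1, le_trans hx.2 hst⟩⟩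
  -- uniqueness of lifts
  have huniq : ∀ t₁ t₂ γ₁ γ₂, 0 ≤ t₁ → t₁ ≤ t₂ → P t₁ γ₁ → P t₂ γ₂ →
      Set.EqOn γ₁ γ₂ (Set.Icc 0 t₁) := by
    intro t₁ t₂ γ₁ γ₂ h0t h12 h1 h2
    refine hsep.eqOn_of_comp_eqOn hinj isPreconnected_Icc h1.1
      (h2.1.mono (Set.Icc_subset_Icc le_rfl h12)) ?_ (Set.left_mem_Icc.2 h0t) ?_
    · intro x hx
      simp only [Function.comp_apply]
      rw [h1.2.2 x hx, h2.2.2 x ⟨hx.1, le_trans hx.2 h12⟩]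
    · rw [h1.2.1, h2.2.1]
  -- canonical lift
  have hsel : ∀ t : ℝ, ∃ γ, t ∈ A → P t γ := by
    intro t
    by_cases h : t ∈ A
    · exact ⟨h.2.choose, fun _ => h.2.choose_spec⟩
    · exact ⟨fun _ => z₀, fun ht => absurd ht h⟩
  choose G hG using hsel
  set Γ : ℝ → ℂ := fun s => G s s with hΓdef
  have hΓeq : ∀ t ∈ A, Set.EqOn Γ (G t) (Set.Icc 0 t) := by
    intro t ht s hs
    have hsA : s ∈ A := hdc t ht s hs.1 hs.2
    exact huniq s t (G s) (G t) hs.1 hs.2 (hG s hsA) (hG t ht) (Set.right_mem_Icc.2 hs.1)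
  have hΓlift : ∀ t ∈ A, P t Γ := by
    intro t ht
    have h1 := hG t ht
    refine ⟨h1.1.congr (hΓeq t ht), ?_, fun s hs => by rw [hΓeq t ht hs]; exact h1.2.2 s hs⟩
    have h00 : (0:ℝ) ∈ Set.Icc (0:ℝ) t := Set.left_mem_Icc.2 (ht.1.1)
    rw [hΓeq t ht h00]; exact h1.2.1
  -- base case
  have h0A : (0:ℝ) ∈ A := by
    refine ⟨Set.left_mem_Icc.2 zero_le_one, fun _ => z₀, continuousOn_const, rfl, ?_⟩
    intro s hs
    have : s = 0 := le_antisymm hs.2 hs.1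
    rw [this]; exact h0
  -- main step
  have hstep : ∀ t ∈ Set.Icc (0:ℝ) 1, t ∈ closure A →
      ∃ δ > 0, Set.Icc (0:ℝ) 1 ∩ Set.Icc (t - δ) (t + δ) ⊆ A := by
    intro t htI htc
    have hsub0 : ∀ s, 0 ≤ s → s < t → s ∈ A := by
      intro s hs0 hst
      by_contra hsA
      have hsub : A ⊆ Set.Iic s := by
        intro x hx
        by_contra hxs
        exact hsA (hdc x hx s hs0 (le_of_not_ge hxs))
      have := closure_mono hsub
      rw [isClosed_Iic.closure_eq] at this
      exact absurd (this htc) (by simpa using hst)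
    -- a limit point z⋆ of the lift from the left (or z₀ if t = 0)
    obtain ⟨zs, hzsu, hzs0⟩ : ∃ zs : ℂ, u zs = σ t ∧ ((t ≤ 0 ∧ zs = z₀) ∨ (0 < t ∧
        ∀ V : Set ℂ, IsOpen V → zs ∈ V → ∀ δ' > 0, ∃ s', 0 ≤ s' ∧ s' < t ∧ t - s' ≤ δ' ∧ Γ s' ∈ V)) := by
      rcases eq_or_lt_of_le htI.1 with h | h
      · exact ⟨z₀, by rw [← h]; exact h0, Or.inl ⟨h.ge, rfl⟩⟩
      · -- t > 0 : use properness to extract a limit point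
        set K : Set ℂ := u ⁻¹' (σ '' Set.Icc 0 1) with hK
        have hKc : IsCompact K := hproper _ (isCompact_Icc.image hσ)
        set sq : ℕ → ℝ := fun n => t - t / (n + 2) with hsq
        have hsq0 : ∀ n, 0 ≤ sq n := by
          intro n
          have h1 : (1:ℝ) ≤ (n:ℝ) + 2 := by
            have := Nat.cast_nonneg (α := ℝ) n
            linarith
          have h2 : t / (n+2) ≤ t := div_le_self h.le h1
          show (0:ℝ) ≤ t - t / ((n:ℝ) + 2)
          linarith
        have hsqlt : ∀ n, sq n < t := by
          intro n
          have : 0 < t / (n+2) := by positivity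
          simp only [hsq]; linarith
        have hsqtend : Filter.Tendsto sq Filter.atTop (nhds t) := by
          have h1 : Filter.Tendsto (fun n : ℕ => t / (n + 2)) Filter.atTop (nhds 0) := by
            apply Filter.Tendsto.div_atTop (tendsto_const_nhds)
            have := tendsto_natCast_atTop_atTop (R := ℝ)
            exact Filter.tendsto_atTop_add_const_right _ 2 this
          have := Filter.Tendsto.sub (tendsto_const_nhds (x := t) (f := Filter.atTop (α := ℕ))) h1
          simpa using this
        have hsqA : ∀ n, sq n ∈ A := fun n => hsub0 (sq n) (hsq0 n) (hsqlt n)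
        have hmem : ∀ n, Γ (sq n) ∈ K := by
          intro n
          have := (hΓlift _ (hsqA n)).2.2 (sq n) (Set.right_mem_Icc.2 (hsq0 n))
          simp only [hK, Set.mem_preimage, this]
          exact ⟨sq n, ⟨hsq0 n, le_trans (hsqlt n).le htI.2⟩, rfl⟩
        obtain ⟨zs, hzsK, φ, hφmono, hφtend⟩ := hKc.tendsto_subseq hmem
        have hsqφ : Filter.Tendsto (fun k => sq (φ k)) Filter.atTop (nhds t) :=
          hsqtend.comp hφmono.tendsto_atTop
        have hzsu : u zs = σ t := by
          have h1 : Filter.Tendsto (fun k => u (Γ (sq (φ k)))) Filter.atTop (nhds (u zs)) :=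
            (hu.continuousAt.tendsto).comp hφtend
          have h2 : Filter.Tendsto (fun k => σ (sq (φ k))) Filter.atTop (nhds (σ t)) :=
            (hσ.continuousAt.tendsto).comp hsqφ
          have heqf : ∀ k, u (Γ (sq (φ k))) = σ (sq (φ k)) := by
            intro k
            exact (hΓlift _ (hsqA (φ k))).2.2 _ (Set.right_mem_Icc.2 (hsq0 (φ k)))
          rw [Filter.tendsto_congr heqf] at h1
          exact tendsto_nhds_unique h1 h2
        refine ⟨zs, hzsu, Or.inr ⟨h, fun V hV hzV δ' hδ' => ?_⟩⟩
        have h1 : ∀ᶠ k in Filter.atTop, Γ (sq (φ k)) ∈ V := hφtend.eventually (hV.eventually_mem hzV)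
        have h2 : ∀ᶠ k in Filter.atTop, t - sq (φ k) ≤ δ' := by
          have : ∀ᶠ k in Filter.atTop, sq (φ k) > t - δ' :=
            hsqφ.eventually (eventually_gt_nhds (by linarith))
          exact this.mono fun k hk => by linarith
        obtain ⟨k, hk1, hk2⟩ := (h1.and h2).exists
        exact ⟨sq (φ k), hsq0 _, hsqlt _, hk2, hk1⟩
    obtain ⟨ε, hε, U, ψ, hUopen, hzU, hmemball, hψcont, hψmem, hψleft, hclopen⟩ :=
      exists_sheet u hu hloc zs
    rw [hzsu] at hmemball hψcont hψmem hclopen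
    obtain ⟨δ₁, hδ₁, hδ₁p⟩ := Metric.continuousAt_iff.1 hσ.continuousAt ε hε
    set δ : ℝ := δ₁ / 2 with hδdef
    have hδpos : 0 < δ := by positivity
    have hδlt : δ < δ₁ := by simp only [hδdef]; linarith
    -- choose the anchor point s₀
    obtain ⟨s₀, hs₀0, hs₀t, hs₀δ, hs₀A, hs₀U⟩ :
        ∃ s₀, 0 ≤ s₀ ∧ s₀ ≤ t ∧ t - s₀ ≤ δ ∧ s₀ ∈ A ∧ Γ s₀ ∈ U := by
      rcases hzs0 with ⟨ht0, hzz⟩ | ⟨ht0, hV⟩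
      · have ht00 : t = 0 := le_antisymm ht0 htI.1
        have hΓ0 : Γ 0 = z₀ := (hΓlift 0 h0A).2.1
        refine ⟨0, le_refl _, htI.1, by rw [ht00]; simpa using hδpos.le, h0A, ?_⟩
        rw [hΓ0, ← hzz]; exact hzU
      · obtain ⟨s', hs'0, hs't, hs'δ, hs'U⟩ := hV U hUopen hzU δ hδpos
        exact ⟨s', hs'0, hs't.le, hs'δ, hsub0 s' hs'0 hs't, hs'U⟩
    -- points between s₀ and t stay in the sheet U
    have hUzone : ∀ s, s₀ ≤ s → s < t → Γ s ∈ U := by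
      intro s hs1 hs2
      have hsA : s ∈ A := hsub0 s (le_trans hs₀0 hs1) hs2
      have hCont : ContinuousOn Γ (Set.Icc s₀ s) :=
        (hΓlift s hsA).1.mono (Set.Icc_subset_Icc hs₀0 le_rfl)
      have hC : IsPreconnected (Γ '' Set.Icc s₀ s) := isPreconnected_Icc.image _ hCont
      have hsubB : Γ '' Set.Icc s₀ s ⊆ u ⁻¹' Metric.ball (σ t) ε := by
        rintro x ⟨x', hx', rfl⟩
        have hux : u (Γ x') = σ x' := (hΓlift s hsA).2.2 x' ⟨le_trans hs₀0 hx'.1, hx'.2⟩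
        simp only [Set.mem_preimage, hux]
        apply hδ₁p
        rw [Real.dist_eq, abs_sub_lt_iff]
        constructor
        · linarith [hx'.2, hs2]
        · linarith [hx'.1, hs₀δ]
      have := hclopen _ hsubB hC ⟨Γ s₀, ⟨s₀, ⟨le_refl _, hs1⟩, rfl⟩, hs₀U⟩
      exact this ⟨s, ⟨hs1, le_refl _⟩, rfl⟩
    have hagree : ∀ s, s ∈ A → Γ s ∈ U → Γ s = ψ (σ s) := by
      intro s hsA hsU
      have h1 := hψleft _ hsU
      rw [(hΓlift s hsA).2.2 s (Set.right_mem_Icc.2 hsA.1.1)] at h1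
      exact h1.symm
    set T : ℝ := min (t + δ) 1 with hT
    have htT : t ≤ T := le_min (by linarith) htI.2
    have hs₀T : s₀ ≤ T := le_trans hs₀t htT
    have hballT : ∀ s ∈ Set.Icc s₀ T, σ s ∈ Metric.ball (σ t) ε := by
      intro s hs
      apply hδ₁p
      rw [Real.dist_eq, abs_sub_lt_iff]
      have h1 : s ≤ t + δ := le_trans hs.2 (min_le_left _ _)
      constructor
      · linarith
      · linarith [hs.1, hs₀δ]
    set γh : ℝ → ℂ := fun s => if s < s₀ then Γ s else ψ (σ s) with hγh
    have hγhΓ : Set.EqOn γh Γ (Set.Icc 0 s₀) := by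
      intro s hs
      rcases lt_or_eq_of_le hs.2 with h' | h'
      · simp only [hγh, if_pos h']
      · simp only [hγh, h', if_neg (lt_irrefl s₀)]
        exact (hagree s₀ hs₀A hs₀U).symm
    have hγhψ : Set.EqOn γh (fun s => ψ (σ s)) (Set.Icc s₀ T) := by
      intro s hs
      simp only [hγh, if_neg (not_lt.2 hs.1)]
    have hγhcont : ContinuousOn γh (Set.Icc 0 T) := by
      have c1 : ContinuousOn γh (Set.Icc 0 s₀) := ((hΓlift s₀ hs₀A).1).congr hγhΓ
      have c2 : ContinuousOn γh (Set.Icc s₀ T) :=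
        ((hψcont.comp hσ.continuousOn hballT)).congr hγhψ
      rw [← Set.Icc_union_Icc_eq_Icc hs₀0 hs₀T]
      intro x hx
      apply ContinuousWithinAt.union
      · by_cases hm : x ∈ Set.Icc 0 s₀
        · exact c1 x hm
        · exact continuousWithinAt_of_notMem_closure (by rwa [isClosed_Icc.closure_eq])
      · by_cases hm : x ∈ Set.Icc s₀ T
        · exact c2 x hm
        · exact continuousWithinAt_of_notMem_closure (by rwa [isClosed_Icc.closure_eq])
    have hγhu : ∀ s ∈ Set.Icc (0:ℝ) T, u (γh s) = σ s := by
      intro s hs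
      by_cases h' : s < s₀
      · have hsA : s ∈ A := hsub0 s hs.1 (lt_of_lt_of_le h' hs₀t)
        simp only [hγh, if_pos h']
        exact (hΓlift s hsA).2.2 s (Set.right_mem_Icc.2 hs.1)
      · simp only [hγh, if_neg h']
        exact (hψmem _ (hballT s ⟨not_lt.1 h', hs.2⟩)).2
    have hγh0 : γh 0 = z₀ := by
      by_cases h' : 0 < s₀
      · simp only [hγh, if_pos h']
        exact (hΓlift 0 h0A).2.1
      · have hs₀eq : s₀ = 0 := le_antisymm (not_lt.1 h') hs₀0
        simp only [hγh, if_neg h']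
        have h1 := hagree s₀ hs₀A hs₀U
        rw [hs₀eq] at h1
        rw [← h1]
        exact (hΓlift 0 h0A).2.1
    refine ⟨δ, hδpos, ?_⟩
    rintro x ⟨hx1, hx2⟩
    have hxT : x ≤ T := le_min (by linarith [hx2.2]) hx1.2
    exact ⟨hx1, γh, hγhcont.mono (Set.Icc_subset_Icc le_rfl hxT), hγh0,
      fun s hs => hγhu s ⟨hs.1, le_trans hs.2 hxT⟩⟩
  have h1A : (1:ℝ) ∈ A := real_induction h0A (fun t ht => ht.1) hstep
  exact ⟨Γ, (hΓlift 1 h1A).1, (hΓlift 1 h1A).2.1, (hΓlift 1 h1A).2.2⟩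


lemma lift_tendsto (u : ℂ → ℂ) (hu : Continuous u)
    (hloc : ∀ z : ℂ, ∃ Φ : OpenPartialHomeomorph ℂ ℂ, z ∈ Φ.source ∧ ∀ w ∈ Φ.source, Φ w = u w)
    (y₀ z₀ : ℂ) (hz₀ : u z₀ = y₀) (γfam : ℂ → ℝ → ℂ)
    (hfam : ∀ y : ℂ, ContinuousOn (γfam y) (Set.Icc 0 1) ∧ γfam y 0 = z₀ ∧
      ∀ t ∈ Set.Icc (0:ℝ) 1, u (γfam y t) = y₀ + (t:ℂ) * (y - y₀))
    (yseq : ℕ → ℂ) (y₁ : ℂ) (hy : Filter.Tendsto yseq Filter.atTop (nhds y₁)) :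
    Filter.Tendsto (fun n => γfam (yseq n) 1) Filter.atTop (nhds (γfam y₁ 1)) := by
  classical
  set σf : ℂ → ℝ → ℂ := fun y s => y₀ + (s:ℂ) * (y - y₀) with hσf
  have hσdist : ∀ s ∈ Set.Icc (0:ℝ) 1, ∀ y y' : ℂ, dist (σf y s) (σf y' s) ≤ dist y y' := by
    intro s hs y y'
    have h1 : σf y s - σf y' s = (s:ℂ) * (y - y') := by simp only [hσf]; ring
    rw [dist_eq_norm, h1, norm_mul, dist_eq_norm]
    have h2 : ‖(s:ℂ)‖ ≤ 1 := by
      rw [Complex.norm_real, Real.norm_eq_abs, abs_of_nonneg hs.1]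
      exact hs.2
    calc ‖(s:ℂ)‖ * ‖y - y'‖ ≤ 1 * ‖y - y'‖ := by
          apply mul_le_mul_of_nonneg_right h2 (norm_nonneg _)
      _ = ‖y - y'‖ := one_mul _
  set A : Set ℝ := {t | t ∈ Set.Icc (0:ℝ) 1 ∧
    Filter.Tendsto (fun n => γfam (yseq n) t) Filter.atTop (nhds (γfam y₁ t))} with hA
  have h0A : (0:ℝ) ∈ A := by
    refine ⟨Set.left_mem_Icc.2 zero_le_one, ?_⟩
    have h1 : ∀ n, γfam (yseq n) 0 = z₀ := fun n => (hfam (yseq n)).2.1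
    have h2 : γfam y₁ 0 = z₀ := (hfam y₁).2.1
    rw [h2, funext h1]
    exact tendsto_const_nhds
  have hstep : ∀ t ∈ Set.Icc (0:ℝ) 1, t ∈ closure A →
      ∃ δ > 0, Set.Icc (0:ℝ) 1 ∩ Set.Icc (t - δ) (t + δ) ⊆ A := by
    intro t htI htc
    set zt : ℂ := γfam y₁ t with hzt
    have hzteq : u zt = σf y₁ t := (hfam y₁).2.2 t htI
    obtain ⟨ε, hε, U, ψ, hUopen, hzU, hmemball, hψcont, hψmem, hψleft, hclopen⟩ :=
      exists_sheet u hu hloc zt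
    rw [hzteq] at hmemball hψcont hψmem hclopen
    -- δ₂ : γfam y₁ stays in U
    have hcwa : ContinuousWithinAt (γfam y₁) (Set.Icc 0 1) t := (hfam y₁).1 t htI
    have hUmem : ∀ᶠ s in nhdsWithin t (Set.Icc 0 1), γfam y₁ s ∈ U :=
      hcwa (hUopen.mem_nhds hzU)
    obtain ⟨δ₂, hδ₂, hδ₂p⟩ := Metric.mem_nhdsWithin_iff.1 hUmem
    -- δ₃ : σf y₁ stays in the ε/2-ball
    have hσcont : ContinuousAt (fun s : ℝ => σf y₁ s) t := by
      apply Continuous.continuousAt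
      exact continuous_const.add ((Complex.continuous_ofReal).mul continuous_const)
    obtain ⟨δ₃, hδ₃, hδ₃p⟩ := Metric.continuousAt_iff.1 hσcont (ε/2) (by linarith)
    set δ : ℝ := min δ₂ δ₃ / 2 with hδ
    have hδpos : 0 < δ := by positivity
    have hδδ₂ : δ < δ₂ := by
      have := min_le_left δ₂ δ₃; simp only [hδ]; linarith
    have hδδ₃ : δ < δ₃ := by
      have := min_le_right δ₂ δ₃; simp only [hδ]; linarith
    have hγU : ∀ s ∈ Set.Icc (0:ℝ) 1, dist s t ≤ δ → γfam y₁ s ∈ U := by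
      intro s hs hd
      exact hδ₂p ⟨Metric.mem_ball.2 (lt_of_le_of_lt hd hδδ₂), hs⟩
    have hσball : ∀ s : ℝ, dist s t ≤ δ → σf y₁ s ∈ Metric.ball (σf y₁ t) (ε/2) := by
      intro s hd
      exact Metric.mem_ball.2 (hδ₃p (lt_of_le_of_lt hd hδδ₃))
    -- pick t' ∈ A near t
    obtain ⟨t', ht'A, ht'd⟩ : ∃ t' ∈ A, dist t t' < δ :=
      Metric.mem_closure_iff.1 htc δ hδpos
    have ht'I : t' ∈ Set.Icc (0:ℝ) 1 := ht'A.1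
    have ht'U : γfam y₁ t' ∈ U := hγU t' ht'I (by rw [dist_comm]; exact ht'd.le)
    -- eventual conditions on n
    have hE1 : ∀ᶠ n in Filter.atTop, dist (yseq n) y₁ < ε/2 :=
      Metric.tendsto_nhds.1 hy (ε/2) (by linarith)
    have hE2 : ∀ᶠ n in Filter.atTop, γfam (yseq n) t' ∈ U :=
      ht'A.2.eventually (hUopen.eventually_mem ht'U)
    -- the interval J
    set J : Set ℝ := Set.Icc (0:ℝ) 1 ∩ Set.Icc (t - δ) (t + δ) with hJ
    have hJd : ∀ s ∈ J, dist s t ≤ δ := by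
      rintro s ⟨hs1, hs2⟩
      rw [Real.dist_eq, abs_sub_le_iff]
      constructor <;> [linarith [hs2.2]; linarith [hs2.1]]
    have ht'J : t' ∈ J := by
      refine ⟨ht'I, ?_⟩
      rw [dist_comm, Real.dist_eq, abs_sub_lt_iff] at ht'd
      constructor <;> [linarith [ht'd.1]; linarith [ht'd.2]]
    -- for large n, γfam (yseq n) is trapped in U over J
    have hJicc : J = Set.Icc (max 0 (t - δ)) (min 1 (t + δ)) := Set.Icc_inter_Icc
    have hσnball : ∀ n, dist (yseq n) y₁ < ε/2 → ∀ s ∈ J, σf (yseq n) s ∈ Metric.ball (σf y₁ t) ε := by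
      intro n h1 s hs
      have ha : dist (σf (yseq n) s) (σf y₁ s) ≤ dist (yseq n) y₁ := hσdist s hs.1 _ _
      have hb : dist (σf y₁ s) (σf y₁ t) < ε/2 := by
        have := hσball s (hJd s hs)
        rwa [Metric.mem_ball] at this
      rw [Metric.mem_ball]
      calc dist (σf (yseq n) s) (σf y₁ t) ≤
          dist (σf (yseq n) s) (σf y₁ s) + dist (σf y₁ s) (σf y₁ t) := dist_triangle _ _ _
        _ < ε/2 + ε/2 := by apply add_lt_add_of_le_of_lt (le_trans ha h1.le) hb
        _ = ε := by ring
    have hKey : ∀ᶠ n in Filter.atTop, ∀ s ∈ J, γfam (yseq n) s = ψ (σf (yseq n) s) := by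
      filter_upwards [hE1, hE2] with n h1 h2
      have hCc : ContinuousOn (γfam (yseq n)) J :=
        (hfam (yseq n)).1.mono Set.inter_subset_left
      have hCp : IsPreconnected (γfam (yseq n) '' J) := by
        rw [hJicc] at hCc ⊢
        exact isPreconnected_Icc.image _ hCc
      have hCsub : γfam (yseq n) '' J ⊆ u ⁻¹' Metric.ball (σf y₁ t) ε := by
        rintro x ⟨s, hs, rfl⟩
        have hux : u (γfam (yseq n) s) = σf (yseq n) s := (hfam (yseq n)).2.2 s hs.1
        simp only [Set.mem_preimage, hux]
        exact hσnball n h1 s hs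
      have hCU : γfam (yseq n) '' J ⊆ U :=
        hclopen _ hCsub hCp ⟨γfam (yseq n) t', ⟨t', ht'J, rfl⟩, h2⟩
      intro s hs
      have hsU : γfam (yseq n) s ∈ U := hCU ⟨s, hs, rfl⟩
      have := hψleft _ hsU
      rw [(hfam (yseq n)).2.2 s hs.1] at this
      exact this.symm
    refine ⟨δ, hδpos, ?_⟩
    intro s hsJ
    refine ⟨hsJ.1, ?_⟩
    -- γfam (yseq n) s = ψ (σf (yseq n) s) → ψ (σf y₁ s) = γfam y₁ s
    have hψats : ContinuousAt ψ (σf y₁ s) := by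
      apply hψcont.continuousAt
      apply Metric.isOpen_ball.mem_nhds
      have := hσball s (hJd s hsJ)
      exact Metric.ball_subset_ball (by linarith) this
    have hσtend : Filter.Tendsto (fun n => σf (yseq n) s) Filter.atTop (nhds (σf y₁ s)) := by
      have hc : Continuous (fun y : ℂ => σf y s) :=
        continuous_const.add (continuous_const.mul (continuous_id.sub continuous_const))
      exact (hc.continuousAt.tendsto).comp hy
    have htends : Filter.Tendsto (fun n => ψ (σf (yseq n) s)) Filter.atTop (nhds (ψ (σf y₁ s))) :=
      hψats.tendsto.comp hσtend
    have hlast : ψ (σf y₁ s) = γfam y₁ s := by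
      have hsU : γfam y₁ s ∈ U := hγU s hsJ.1 (hJd s hsJ)
      have := hψleft _ hsU
      rw [(hfam y₁).2.2 s hsJ.1] at this
      exact this
    rw [← hlast]
    apply htends.congr'
    filter_upwards [hKey] with n hn
    exact (hn s hsJ).symm
  exact (real_induction h0A (fun t ht => ht.1) hstep).2


lemma bijective_of_proper (u : ℂ → ℂ) (hu : Continuous u)
    (hloc : ∀ z : ℂ, ∃ Φ : OpenPartialHomeomorph ℂ ℂ, z ∈ Φ.source ∧ ∀ w ∈ Φ.source, Φ w = u w)
    (hproper : ∀ K : Set ℂ, IsCompact K → IsCompact (u ⁻¹' K)) :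
    Function.Bijective u := by
  classical
  have hsep : IsSeparatedMap u := T2Space.isSeparatedMap u
  have hinj : IsLocallyInjective u := by
    intro z
    obtain ⟨Φ, hz, hΦ⟩ := hloc z
    refine ⟨Φ.source, Φ.open_source, hz, ?_⟩
    intro a ha b hb hab
    apply Φ.injOn ha hb
    rw [hΦ a ha, hΦ b hb]
    exact hab
  set z₀ : ℂ := 0 with hz₀def
  set y₀ : ℂ := u 0 with hy₀def
  have hexists : ∀ y : ℂ, ∃ γ : ℝ → ℂ, ContinuousOn γ (Set.Icc 0 1) ∧ γ 0 = z₀ ∧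
      ∀ t ∈ Set.Icc (0:ℝ) 1, u (γ t) = y₀ + (t:ℂ) * (y - y₀) := by
    intro y
    apply exists_lift u hu hloc hproper hsep hinj
      (fun t : ℝ => y₀ + (t:ℂ) * (y - y₀))
      (continuous_const.add ((Complex.continuous_ofReal).mul continuous_const))
    simp [hz₀def, hy₀def]
  choose γfam hfam using hexists
  set s : ℂ → ℂ := fun y => γfam y 1 with hs
  have h1I : (1:ℝ) ∈ Set.Icc (0:ℝ) 1 := Set.right_mem_Icc.2 zero_le_one
  have hus : ∀ y, u (s y) = y := by
    intro y
    have := (hfam y).2.2 1 h1I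
    simpa using this
  have hscont : Continuous s := by
    apply SeqContinuous.continuous
    intro yseq y₁ hy
    exact lift_tendsto u hu hloc y₀ z₀ rfl γfam hfam yseq y₁ hy
  have hs₀ : s y₀ = z₀ := by
    have huconst : ∀ t ∈ Set.Icc (0:ℝ) 1, u ((fun _ => z₀) t) = y₀ + (t:ℂ) * (y₀ - y₀) := by
      intro t _; simp [hz₀def, hy₀def]
    have := hsep.eqOn_of_comp_eqOn hinj isPreconnected_Icc (hfam y₀).1
      (continuousOn_const (c := z₀)) ?_ (Set.left_mem_Icc.2 zero_le_one) ?_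
    · exact this h1I
    · intro t ht
      simp only [Function.comp_apply]
      rw [(hfam y₀).2.2 t ht]
      simp [hz₀def, hy₀def]
    · exact (hfam y₀).2.1
  have hsu : s ∘ u = id := by
    apply hsep.eq_of_comp_eq hinj (hscont.comp hu) continuous_id _ z₀
    · show s (u z₀) = z₀
      exact hs₀
    · funext z
      simp only [Function.comp_apply, id_eq]
      exact hus (u z)
  constructor
  · intro a b hab
    have ha := congrFun hsu a
    have hb := congrFun hsu b
    simp only [Function.comp_apply, id_eq] at ha hb
    rw [← ha, ← hb, hab]
  · intro y
    exact ⟨s y, hus y⟩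



lemma fderiv_formula (u : ℂ → ℂ) (z : ℂ) (w : ℂ) :
    fderiv ℝ u z w = dzed u z * w + dbar u z * (starRingEnd ℂ) w := by
  obtain ⟨x, y, rfl⟩ : ∃ x y : ℝ, w = (x:ℂ) + y*Complex.I :=
    ⟨w.re, w.im, (Complex.re_add_im w).symm⟩
  have hlin : fderiv ℝ u z ((x:ℂ) + y*Complex.I) =
      (x : ℝ) • fderiv ℝ u z 1 + (y : ℝ) • fderiv ℝ u z Complex.I := by
    have h1 : ((x:ℂ) + y*Complex.I) = (x : ℝ) • (1:ℂ) + (y : ℝ) • Complex.I := by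
      simp [Complex.real_smul]
    rw [h1, map_add, _root_.map_smul, _root_.map_smul]
  have hconj : (starRingEnd ℂ) ((x:ℂ) + y*Complex.I) = (x:ℂ) - y*Complex.I := by
    simp only [map_add, map_mul, Complex.conj_ofReal, Complex.conj_I]
    ring
  rw [hlin, hconj, dzed, dbar, Complex.real_smul, Complex.real_smul]
  linear_combination ((y:ℂ) * fderiv ℝ u z Complex.I) * Complex.I_sq

lemma deriv_equiv (g : ℂ → ℂ) (Mg : ℝ) (hgM : ∀ z : ℂ, ‖g z‖ ≤ Mg) (hMg : Mg < 1)
    (u : ℂ → ℂ) (hu : ContDiff ℝ (⊤ : ℕ∞) u)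
    (hZu : ∀ z : ℂ, dbar u z + g z * dzed u z = 0)
    (hZbaru : ∀ z : ℂ, dzed u z + (starRingEnd ℂ) (g z) * dbar u z ≠ 0) (z : ℂ) :
    ∃ E : ℂ ≃L[ℝ] ℂ, (E : ℂ →L[ℝ] ℂ) = fderiv ℝ u z := by
  have hfb : dbar u z = -(g z * dzed u z) := eq_neg_of_add_eq_zero_left (hZu z)
  have hfne : dzed u z ≠ 0 := by
    intro h
    apply hZbaru z
    rw [h, hfb, h]
    ring
  have habs : ‖dbar u z‖ < ‖dzed u z‖ := by
    rw [hfb, norm_neg, norm_mul]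
    calc ‖g z‖ * ‖dzed u z‖ ≤ Mg * ‖dzed u z‖ :=
          mul_le_mul_of_nonneg_right (hgM z) (norm_nonneg _)
      _ < 1 * ‖dzed u z‖ :=
          mul_lt_mul_of_pos_right hMg (norm_pos_iff.2 hfne)
      _ = _ := one_mul _
  have hker : ∀ w : ℂ, fderiv ℝ u z w = 0 → w = 0 := by
    intro w hw
    by_contra hwne
    rw [fderiv_formula] at hw
    have h1 : dzed u z * w = -(dbar u z * (starRingEnd ℂ) w) := eq_neg_of_add_eq_zero_left hw
    have h2 : ‖dzed u z‖ * ‖w‖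
        = ‖dbar u z‖ * ‖w‖ := by
      have := congrArg norm h1
      rwa [norm_mul, norm_neg, norm_mul, Complex.norm_conj] at this
    have h3 : 0 < ‖w‖ := by
      rwa [norm_pos_iff]
    have := mul_right_cancel₀ (ne_of_gt h3) h2
    rw [this] at habs
    exact lt_irrefl _ habs
  have hinj : Function.Injective (fderiv ℝ u z) := by
    intro w w' hww
    have : fderiv ℝ u z (w - w') = 0 := by rw [map_sub, hww, sub_self]
    have := hker _ this
    exact sub_eq_zero.1 this
  have hsurj : Function.Surjective (fderiv ℝ u z) :=
    (LinearMap.injective_iff_surjective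
      (f := (fderiv ℝ u z : ℂ →L[ℝ] ℂ).toLinearMap)).1 hinj
  set E' : ℂ ≃ₗ[ℝ] ℂ :=
    LinearEquiv.ofBijective ((fderiv ℝ u z : ℂ →L[ℝ] ℂ).toLinearMap) ⟨hinj, hsurj⟩ with hE'
  refine ⟨E'.toContinuousLinearEquiv, ?_⟩
  apply ContinuousLinearMap.ext
  intro w
  rfl


lemma local_homeo (g : ℂ → ℂ) (Mg : ℝ) (hgM : ∀ z : ℂ, ‖g z‖ ≤ Mg) (hMg : Mg < 1)
    (u : ℂ → ℂ) (hu : ContDiff ℝ (⊤ : ℕ∞) u)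
    (hZu : ∀ z : ℂ, dbar u z + g z * dzed u z = 0)
    (hZbaru : ∀ z : ℂ, dzed u z + (starRingEnd ℂ) (g z) * dbar u z ≠ 0) :
    ∀ z : ℂ, ∃ Φ : OpenPartialHomeomorph ℂ ℂ, z ∈ Φ.source ∧ ∀ w ∈ Φ.source, Φ w = u w := by
  intro z
  obtain ⟨E, hE⟩ := deriv_equiv g Mg hgM hMg u hu hZu hZbaru z
  have hstrict : HasStrictFDerivAt u (E : ℂ →L[ℝ] ℂ) z := by
    rw [hE]
    exact hu.contDiffAt.hasStrictFDerivAt (by simp)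
  exact ⟨hstrict.toOpenPartialHomeomorph u, hstrict.mem_toOpenPartialHomeomorph_source,
    fun w _ => congrFun hstrict.toOpenPartialHomeomorph_coe w⟩

lemma translate_horiz (u : ℂ → ℂ) (e₁ : ℂ) (h1 : ∀ z, u (z+1) = u z + e₁) :
    ∀ (m : ℤ) (z : ℂ), u (z + m) = u z + m*e₁ := by
  intro m
  induction m using Int.induction_on with
  | zero => intro z; simp
  | succ k ih =>
      intro z
      have hh : (z + ((k:ℤ)+1 : ℤ) : ℂ) = (z + (k:ℤ)) + 1 := by push_cast; ring
      rw [hh, h1, ih]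
      push_cast; ring
  | pred k ih =>
      intro z
      have hh : (z + (-(k:ℤ)-1 : ℤ) : ℂ) + 1 = z + (-(k:ℤ) : ℤ) := by push_cast; ring
      have h' := h1 (z + (-(k:ℤ)-1 : ℤ))
      rw [hh, ih] at h'
      have h2 : u (z + (-(k:ℤ)-1 : ℤ)) = u z + ((-(k:ℤ) : ℤ):ℂ)*e₁ - e₁ := by
        have := h'.symm
        linear_combination this
      rw [h2]
      push_cast; ring

lemma translate_vert (u : ℂ → ℂ) (e₂ : ℂ) (h2 : ∀ z, u (z + Complex.I) = u z + e₂) :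
    ∀ (n : ℤ) (z : ℂ), u (z + n*Complex.I) = u z + n*e₂ := by
  intro n
  induction n using Int.induction_on with
  | zero => intro z; simp
  | succ k ih =>
      intro z
      have hh : (z + (((k:ℤ)+1 : ℤ):ℂ)*Complex.I : ℂ) = (z + ((k:ℤ):ℂ)*Complex.I) + Complex.I := by
        push_cast; ring
      rw [hh, h2, ih]
      push_cast; ring
  | pred k ih =>
      intro z
      have hh : (z + ((-(k:ℤ)-1 : ℤ):ℂ)*Complex.I : ℂ) + Complex.I
          = z + ((-(k:ℤ) : ℤ):ℂ)*Complex.I := by push_cast; ring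
      have h' := h2 (z + ((-(k:ℤ)-1 : ℤ):ℂ)*Complex.I)
      rw [hh, ih] at h'
      have h3 : u (z + ((-(k:ℤ)-1 : ℤ):ℂ)*Complex.I) = u z + ((-(k:ℤ) : ℤ):ℂ)*e₂ - e₂ := by
        linear_combination h'.symm
      rw [h3]
      push_cast; ring

lemma translate_lattice (u : ℂ → ℂ) (e₁ e₂ : ℂ) (h1 : ∀ z, u (z+1) = u z + e₁)
    (h2 : ∀ z, u (z + Complex.I) = u z + e₂) :
    ∀ (m n : ℤ) (z : ℂ), u (z + m + n*Complex.I) = u z + m*e₁ + n*e₂ := by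
  intro m n z
  calc u (z + m + n*Complex.I) = u (z + m) + n*e₂ := translate_vert u e₂ h2 n (z+m)
    _ = u z + m*e₁ + n*e₂ := by rw [translate_horiz u e₁ h1 m z]



lemma independence (u : ℂ → ℂ) (hdiff : Differentiable ℝ u) (hcont : Continuous u)
    (hsurjF : ∀ z : ℂ, Function.Surjective (fderiv ℝ u z))
    (e₁ e₂ : ℂ)
    (htrans : ∀ (m n : ℤ) (z : ℂ), u (z + m + n*Complex.I) = u z + m*e₁ + n*e₂) :
    LinearIndependent ℝ ![e₁, e₂] := by
  classical
  by_contra hdep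
  -- produce a common direction c
  obtain ⟨c, hc0, r₁, r₂, hr₁, hr₂⟩ : ∃ c : ℂ, c ≠ 0 ∧ ∃ r₁ r₂ : ℝ,
      e₁ = (r₁:ℂ) * c ∧ e₂ = (r₂:ℂ) * c := by
    rw [linearIndependent_fin2] at hdep
    push_neg at hdep
    simp only [Matrix.cons_val_one, Matrix.head_cons, Matrix.cons_val_zero] at hdep
    by_cases h2 : e₂ = 0
    · by_cases h1 : e₁ = 0
      · exact ⟨1, one_ne_zero, 0, 0, by simp [h1], by simp [h2]⟩
      · exact ⟨e₁, h1, 1, 0, by simp, by simp [h2]⟩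
    · obtain ⟨r, hr⟩ := hdep h2
      refine ⟨e₂, h2, r, 1, ?_, by simp⟩
      rw [← hr, Complex.real_smul]
  have hcc : (starRingEnd ℂ) c * c = ((Complex.normSq c : ℝ):ℂ) := by
    rw [mul_comm, Complex.mul_conj]
  set φ : ℂ → ℝ := fun z => ((starRingEnd ℂ) c * u z).im with hφ
  have hφcont : Continuous φ := Complex.continuous_im.comp (continuous_const.mul hcont)
  have hφtrans : ∀ (m n : ℤ) (z : ℂ), φ (z + m + n*Complex.I) = φ z := by
    intro m n z
    simp only [hφ]
    rw [htrans m n z, hr₁, hr₂]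
    have hexp : (starRingEnd ℂ) c * (u z + (m:ℂ)*((r₁:ℂ)*c) + (n:ℂ)*((r₂:ℂ)*c))
        = (starRingEnd ℂ) c * u z
          + (((m:ℝ)*r₁ + (n:ℝ)*r₂ : ℝ):ℂ) * ((Complex.normSq c : ℝ):ℂ) := by
      push_cast
      linear_combination ((m:ℂ)*(r₁:ℂ) + (n:ℂ)*(r₂:ℂ)) * hcc
    rw [hexp]
    rw [Complex.add_im, ← Complex.ofReal_mul, Complex.ofReal_im, add_zero]
  -- compact fundamental square
  set K : Set ℂ := (fun p : ℝ × ℝ => (p.1:ℂ) + (p.2:ℂ)*Complex.I) ''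
    (Set.Icc 0 1 ×ˢ Set.Icc 0 1) with hK
  have hKc : IsCompact K := by
    apply (isCompact_Icc.prod isCompact_Icc).image
    exact (Complex.continuous_ofReal.comp continuous_fst).add
      ((Complex.continuous_ofReal.comp continuous_snd).mul continuous_const)
  have hKne : K.Nonempty := ⟨0, ⟨(0,0), by simp, by simp⟩⟩
  obtain ⟨z₀, hz₀K, hmax⟩ := hKc.exists_isMaxOn hKne hφcont.continuousOn
  have hglob : ∀ z : ℂ, φ z ≤ φ z₀ := by
    intro z
    set m : ℤ := ⌊z.re⌋ with hm
    set n : ℤ := ⌊z.im⌋ with hn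
    set z' : ℂ := z - m - n*Complex.I with hz'def
    have hz' : z' ∈ K := by
      refine ⟨(z.re - m, z.im - n), ?_, ?_⟩
      · simp only [Set.mem_prod, Set.mem_Icc]
        refine ⟨⟨sub_nonneg.2 (Int.floor_le _), ?_⟩, sub_nonneg.2 (Int.floor_le _), ?_⟩
        · have := Int.lt_floor_add_one z.re; linarith
        · have := Int.lt_floor_add_one z.im; linarith
      · apply Complex.ext <;> simp [hz'def]
    have h1 := hφtrans m n z'
    rw [show z' + m + n*Complex.I = z by rw [hz'def]; ring] at h1
    rw [h1]
    exact hmax hz'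
  have hlm : IsLocalMax φ z₀ := Filter.Eventually.of_forall hglob
  have hd0 : fderiv ℝ φ z₀ = 0 := hlm.fderiv_eq_zero
  set L : ℂ →L[ℝ] ℝ :=
    Complex.imCLM.comp ((ContinuousLinearMap.mul ℝ ℂ) ((starRingEnd ℂ) c)) with hL
  have hfd : HasFDerivAt φ (L.comp (fderiv ℝ u z₀)) z₀ := by
    have h1 : HasFDerivAt u (fderiv ℝ u z₀) z₀ := (hdiff z₀).hasFDerivAt
    exact (L.hasFDerivAt (x := u z₀)).comp z₀ h1
  have heq : fderiv ℝ φ z₀ = L.comp (fderiv ℝ u z₀) := hfd.fderiv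
  obtain ⟨w, hw⟩ := hsurjF z₀ (Complex.I * c)
  have h2 : (L.comp (fderiv ℝ u z₀)) w = 0 := by
    rw [← heq, hd0]; rfl
  rw [ContinuousLinearMap.comp_apply, hw] at h2
  have h3 : L (Complex.I * c) = Complex.normSq c := by
    simp only [hL, ContinuousLinearMap.comp_apply, ContinuousLinearMap.mul_apply',
      Complex.imCLM_apply]
    rw [show (starRingEnd ℂ) c * (Complex.I * c) = Complex.I * ((starRingEnd ℂ) c * c) by ring,
      hcc]
    simp
  rw [h3] at h2
  exact (ne_of_gt (Complex.normSq_pos.2 hc0)) h2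



lemma normSq_ne_one (a : ℂ) (hind : LinearIndependent ℝ ![1 + a, Complex.I - a*Complex.I]) :
    Complex.normSq a ≠ 1 := by
  intro h
  rw [LinearIndependent.pair_iff] at hind
  have hxy : a.re*a.re + a.im*a.im = 1 := by rwa [Complex.normSq_apply] at h
  have hrel : (a.im) • (1 + a) + (-(1 + a.re)) • (Complex.I - a*Complex.I) = 0 := by
    rw [Complex.real_smul, Complex.real_smul]
    apply Complex.ext
    · simp only [Complex.add_re, Complex.mul_re, Complex.mul_im, Complex.ofReal_re,
        Complex.ofReal_im, Complex.I_re, Complex.I_im, Complex.one_re, Complex.one_im,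
        Complex.sub_re, Complex.sub_im, Complex.zero_re, Complex.neg_re, Complex.neg_im]
      ring
    · simp only [Complex.add_im, Complex.mul_re, Complex.mul_im, Complex.ofReal_re,
        Complex.ofReal_im, Complex.I_re, Complex.I_im, Complex.one_re, Complex.one_im,
        Complex.sub_re, Complex.sub_im, Complex.zero_im, Complex.neg_re, Complex.neg_im]
      nlinarith [hxy]
  have h1 : a.im = 0 := (hind _ _ hrel).1
  have h2 : (1 + a.re) = 0 := by have := (hind _ _ hrel).2; linarith
  have ha : a = -1 := by
    apply Complex.ext
    · simp only [Complex.neg_re, Complex.one_re]; linarith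
    · simp only [Complex.neg_im, Complex.one_im, h1, neg_zero]
  have he₁ : (1 + a) = 0 := by rw [ha]; ring
  have := hind 1 0 (by rw [he₁]; simp)
  exact one_ne_zero this.1

lemma coercive (a : ℂ) (z : ℂ) :
    |1 - ‖a‖| * ‖z‖ ≤ ‖z + a * (starRingEnd ℂ) z‖ := by
  have hconj : ‖(starRingEnd ℂ) z‖ = ‖z‖ := Complex.norm_conj z
  have habsmul : ‖a * (starRingEnd ℂ) z‖ = ‖a‖ * ‖z‖ := by
    rw [norm_mul, hconj]
  rcases le_or_gt (‖a‖) 1 with h | h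
  · rw [abs_of_nonneg (by linarith)]
    have h1 : ‖z‖ ≤ ‖z + a*(starRingEnd ℂ) z‖
        + ‖a‖ * ‖z‖ := by
      calc ‖z‖
          = ‖(z + a*(starRingEnd ℂ) z) + (-(a*(starRingEnd ℂ) z))‖ := by ring_nf
        _ ≤ ‖z + a*(starRingEnd ℂ) z‖ + ‖-(a*(starRingEnd ℂ) z)‖ :=
            norm_add_le _ _
        _ = _ := by rw [norm_neg, habsmul]
    nlinarith [norm_nonneg z]
  · rw [abs_of_nonpos (by linarith)]
    have h1 : ‖a‖ * ‖z‖ ≤ ‖z + a*(starRingEnd ℂ) z‖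
        + ‖z‖ := by
      calc ‖a‖ * ‖z‖ = ‖a*(starRingEnd ℂ) z‖ := habsmul.symm
        _ = ‖(z + a*(starRingEnd ℂ) z) + (-z)‖ := by ring_nf
        _ ≤ ‖z + a*(starRingEnd ℂ) z‖ + ‖-z‖ := norm_add_le _ _
        _ = _ := by rw [norm_neg]
    nlinarith [norm_nonneg z]


end IMTB

set_option maxHeartbeats 1000000 in
/-- Let `Z = ∂/∂z̄ + g ∂/∂z` be elliptic on the torus (`g` smooth periodic,
`‖g‖_∞ ≤ Mg < 1`), let `u = z + a z̄ + v` (with `v` periodic, `v̂(0) = 0`) be its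
distinguished null solution (`Z u = 0`), and suppose `conj(Z) u` is nowhere zero.
Set `e₁ = u(z+1) − u(z) = u(1) − u(0)` and `e₂ = u(z+i) − u(z) = u(i) − u(0)`.
Then `e₁, e₂` are `ℝ`-linearly independent, `u : ℂ → ℂ` is a bijection (indeed a
diffeomorphism), and the induced map `[u] : T² → ℂ/L`, `L = ℤe₁ + ℤe₂`, is a
bijection. -/
theorem induced_map_to_torus_bijective
    (g : ℂ → ℂ) (hg : ContDiff ℝ (⊤ : ℕ∞) g) (hgper : Per g)
    (Mg : ℝ) (hgM : ∀ z : ℂ, ‖g z‖ ≤ Mg) (hMg : Mg < 1)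
    (u : ℂ → ℂ) (hu : ContDiff ℝ (⊤ : ℕ∞) u)
    (hform : ∃ (a : ℂ) (v : ℂ → ℂ), (ContDiff ℝ (⊤ : ℕ∞) v ∧ Per v ∧ (∫ z in Dsq, v z) = 0) ∧
      u = fun z => z + a * (starRingEnd ℂ) z + v z)
    (hZu : ∀ z : ℂ, dbar u z + g z * dzed u z = 0)
    (hZbaru : ∀ z : ℂ, dzed u z + (starRingEnd ℂ) (g z) * dbar u z ≠ 0) :
    LinearIndependent ℝ ![u 1 - u 0, u Complex.I - u 0] ∧
    Function.Bijective u ∧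
    (∀ z w : ℂ,
      (∃ m n : ℤ, u z - u w = (m : ℂ) * (u 1 - u 0) + (n : ℂ) * (u Complex.I - u 0)) ↔
      (∃ m n : ℤ, z - w = (m : ℂ) + (n : ℂ) * Complex.I)) ∧
    (∀ c : ℂ, ∃ z : ℂ, ∃ m n : ℤ,
      u z - c = (m : ℂ) * (u 1 - u 0) + (n : ℂ) * (u Complex.I - u 0)) := by
  classical
  obtain ⟨a, v, ⟨hv, hvper, -⟩, hueq⟩ := hform
  have hufun : ∀ z : ℂ, u z = z + a * (starRingEnd ℂ) z + v z := fun z => by rw [hueq]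
  have hucont : Continuous u := hu.continuous
  have hudiff : Differentiable ℝ u := hu.differentiable (by simp)
  have hv1 : ∀ z, v (z+1) = v z := fun z => (hvper z).1
  have hvI : ∀ z, v (z+Complex.I) = v z := fun z => (hvper z).2
  have he₁ : u 1 - u 0 = 1 + a := by
    have h01 : v 1 = v 0 := by have := hv1 0; simpa using this
    rw [hufun 1, hufun 0, h01]
    simp only [map_one, map_zero]
    ring
  have he₂ : u Complex.I - u 0 = Complex.I - a * Complex.I := by
    have h0I : v Complex.I = v 0 := by have := hvI 0; simpa using this
    rw [hufun Complex.I, hufun 0, h0I]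
    simp only [Complex.conj_I, map_zero]
    ring
  have h1 : ∀ z, u (z + 1) = u z + (u 1 - u 0) := by
    intro z
    rw [he₁, hufun (z+1), hufun z, hv1 z, map_add, map_one]
    ring
  have hI : ∀ z, u (z + Complex.I) = u z + (u Complex.I - u 0) := by
    intro z
    rw [he₂, hufun (z+Complex.I), hufun z, hvI z, map_add, Complex.conj_I]
    ring
  have htrans := IMTB.translate_lattice u _ _ h1 hI
  have hloc := IMTB.local_homeo g Mg hgM hMg u hu hZu hZbaru
  have hsurjF : ∀ z : ℂ, Function.Surjective (fderiv ℝ u z) := by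
    intro z
    obtain ⟨E, hE⟩ := IMTB.deriv_equiv g Mg hgM hMg u hu hZu hZbaru z
    intro y
    refine ⟨E.symm y, ?_⟩
    rw [← hE]
    exact E.apply_symm_apply y
  have hind : LinearIndependent ℝ ![u 1 - u 0, u Complex.I - u 0] :=
    IMTB.independence u hudiff hucont hsurjF _ _ htrans
  have hna : Complex.normSq a ≠ 1 := by
    apply IMTB.normSq_ne_one a
    have hind' := hind
    rw [he₁, he₂] at hind'
    exact hind'
  have habs1 : ‖a‖ ≠ 1 := by
    intro hh
    apply hna
    rw [← Complex.sq_norm, hh]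
    norm_num
  have hεa : 0 < |1 - ‖a‖| := by
    rw [abs_pos]
    intro hh
    apply habs1
    linarith
  -- v is bounded
  obtain ⟨Cv, hCv⟩ : ∃ C : ℝ, ∀ z : ℂ, ‖v z‖ ≤ C := by
    set K : Set ℂ := (fun p : ℝ × ℝ => (p.1:ℂ) + (p.2:ℂ)*Complex.I) ''
      (Set.Icc 0 1 ×ˢ Set.Icc 0 1) with hK
    have hKc : IsCompact K := by
      apply (isCompact_Icc.prod isCompact_Icc).image
      exact (Complex.continuous_ofReal.comp continuous_fst).add
        ((Complex.continuous_ofReal.comp continuous_snd).mul continuous_const)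
    obtain ⟨C, hC⟩ := hKc.exists_bound_of_continuousOn hv.continuous.continuousOn
    have hvtrans : ∀ (m n : ℤ) (z : ℂ), v (z + m + n*Complex.I) = v z := by
      have hv1' : ∀ z, v (z+1) = v z + 0 := fun z => by rw [hv1 z, add_zero]
      have hvI' : ∀ z, v (z+Complex.I) = v z + 0 := fun z => by rw [hvI z, add_zero]
      intro m n z
      have := IMTB.translate_lattice v 0 0 hv1' hvI' m n z
      simpa using this
    refine ⟨C, fun z => ?_⟩
    set m : ℤ := ⌊z.re⌋ with hm
    set n : ℤ := ⌊z.im⌋ with hn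
    set z' : ℂ := z - m - n*Complex.I with hz'def
    have hz' : z' ∈ K := by
      refine ⟨(z.re - m, z.im - n), ?_, ?_⟩
      · simp only [Set.mem_prod, Set.mem_Icc]
        refine ⟨⟨sub_nonneg.2 (Int.floor_le _), ?_⟩, sub_nonneg.2 (Int.floor_le _), ?_⟩
        · have := Int.lt_floor_add_one z.re; linarith
        · have := Int.lt_floor_add_one z.im; linarith
      · apply Complex.ext <;> simp [hz'def]
    have hvz : v z = v z' := by
      have := hvtrans m n z'
      rw [show z' + m + n*Complex.I = z by rw [hz'def]; ring] at this
      exact this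
    rw [hvz]
    have := hC z' hz'
    exact this
  -- properness
  have hproper : ∀ K : Set ℂ, IsCompact K → IsCompact (u ⁻¹' K) := by
    intro K hK
    obtain ⟨R, hR⟩ := hK.isBounded.subset_closedBall 0
    have hclosed : IsClosed (u ⁻¹' K) := hK.isClosed.preimage hucont
    have hsub : u ⁻¹' K ⊆ Metric.closedBall 0 ((R + Cv) / |1 - ‖a‖|) := by
      intro z hz
      have h1 : ‖u z‖ ≤ R := by
        have := hR hz
        rw [Metric.mem_closedBall, Complex.dist_eq, sub_zero] at this
        exact this
      have h2 : |1 - ‖a‖| * ‖z‖ ≤ R + Cv := by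
        calc |1 - ‖a‖| * ‖z‖
            ≤ ‖z + a * (starRingEnd ℂ) z‖ := IMTB.coercive a z
          _ = ‖u z + (- v z)‖ := by rw [hufun z]; ring_nf
          _ ≤ ‖u z‖ + ‖-(v z)‖ := norm_add_le _ _
          _ = ‖u z‖ + ‖v z‖ := by rw [norm_neg]
          _ ≤ R + Cv := add_le_add h1 (hCv z)
      rw [Metric.mem_closedBall, Complex.dist_eq, sub_zero]
      rw [le_div_iff₀ hεa]
      linarith [h2]
    exact (isCompact_closedBall 0 _).of_isClosed_subset hclosed hsub
  have hbij : Function.Bijective u := IMTB.bijective_of_proper u hucont hloc hproper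
  refine ⟨hind, hbij, ?_, ?_⟩
  · intro z w
    constructor
    · rintro ⟨m, n, hmn⟩
      refine ⟨m, n, ?_⟩
      have h2 : u z = u (w + m + n*Complex.I) := by
        rw [htrans m n w]
        linear_combination hmn
      have h3 := hbij.1 h2
      rw [h3]
      ring
    · rintro ⟨m, n, hmn⟩
      refine ⟨m, n, ?_⟩
      have hz : z = w + m + n*Complex.I := by linear_combination hmn
      rw [hz, htrans m n w]
      ring
  · intro c
    obtain ⟨z, hz⟩ := hbij.2 c
    exact ⟨z, 0, 0, by rw [hz]; simp⟩
end

section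
/- Let u be a real-analytic complex-valued function on an open connected set Ω ⊂ C satisfying ∂u/∂z̄ + a(z)u + b(z)·conj(u) = 0 with a, b real-analytic (this system is elliptic, so u is automatically real-analytic if a priori smooth). If u is not identically 0 and u(z₀) = 0, then there exist an integer m ≥ 1 and C ≠ 0 such that u(z) = C(z − z₀)^m + O(|z − z₀|^{m+1}); in particular all zeros of u are isolated. -/
open scoped Topology
open Asymptotics

/-!
Expand `u` at `z₀` in its real power series and let `P(y) = p_m(y, …, y)` be its first
nonvanishing homogeneous term (it exists by the identity theorem, since `u ≢ 0` on the connected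
set `Ω`). The equation gives `|∂u/∂z̄| ≤ const · |u| = O(|y|^m)`, while `∂u/∂z̄ - ∂P/∂z̄` is
`O(|y|^m)` because the derivative of `u` is represented by the derived power series. Hence the
homogeneous polynomial `∂P/∂z̄` of degree `m - 1` is `O(|y|^m)`, so it vanishes identically: `P` is
an entire holomorphic function, homogeneous of degree `m` under real dilations, hence it agrees with
`C y^m`, `C = P(1) ≠ 0`, on `ℝ` and therefore everywhere. Finally `u ~ C (z - z₀)^m` forces `u ≠ 0` on a punctured neighbourhood.
-/

open Filter

namespace FormalMultilinearSeries

variable {𝕜 E F : Type*} [NontriviallyNormedField 𝕜] [NormedAddCommGroup E] [NormedSpace 𝕜 E]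
  [NormedAddCommGroup F] [NormedSpace 𝕜 F]

theorem partialSum_succ (p : FormalMultilinearSeries 𝕜 E F) (n : ℕ) (y : E) :
    p.partialSum (n + 1) y = p.partialSum n y + p n fun _ => y :=
  Finset.sum_range_succ _ _

theorem partialSum_eq_zero_of_apply_diag_eq_zero {p : FormalMultilinearSeries 𝕜 E F} {m : ℕ}
    (h : ∀ k < m, ∀ y, p k (fun _ => y) = 0) (y : E) : p.partialSum m y = 0 :=
  Finset.sum_eq_zero fun k hk => h k (Finset.mem_range.1 hk) y

theorem derivSeries_congr {p q : FormalMultilinearSeries 𝕜 E F} {n : ℕ}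
    (h : p (n + 1) = q (n + 1)) : p.derivSeries n = q.derivSeries n := by
  have h' : p (1 + n) = q (1 + n) := by rwa [add_comm 1 n]
  simp only [derivSeries, changeOriginSeries, changeOriginSeriesTerm,
    ContinuousLinearMap.compFormalMultilinearSeries_apply, h']

theorem hasFiniteFPowerSeriesOnBall_apply_diag {n : ℕ} (M : E [×n]→L[𝕜] F) :
    HasFiniteFPowerSeriesOnBall (fun y => M fun _ => y) (Function.update 0 n M) 0 (n + 1) ⊤ := by
  refine .mk' (fun k hk => Function.update_of_ne (by omega) _ _) ENNReal.zero_lt_top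
    fun y _ => ?_
  rw [Finset.sum_eq_single_of_mem n (Finset.self_mem_range_succ n)
    fun k _ hk => by rw [Function.update_of_ne hk]; rfl]
  simp

theorem fderiv_apply_diag (p : FormalMultilinearSeries 𝕜 E F) (n : ℕ) (y : E) :
    fderiv 𝕜 (fun x => p (n + 1) fun _ => x) y = p.derivSeries n fun _ => y := by
  set q : FormalMultilinearSeries 𝕜 E F := Function.update 0 (n + 1) (p (n + 1))
  have hq := (hasFiniteFPowerSeriesOnBall_apply_diag (p (n + 1))).fderiv
  have hsum := hq.toHasFPowerSeriesOnBall.hasSum (y := y) (by simp)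
  rw [zero_add] at hsum
  refine hsum.unique (hasSum_single n fun k hk => ?_) |>.trans ?_
  · rw [q.derivSeries_eq_zero (Function.update_of_ne (by omega) _ _)]
    rfl
  · rw [derivSeries_congr (Function.update_self _ _ _)]

end FormalMultilinearSeries

namespace HasFPowerSeriesAt

variable {𝕜 E F : Type*} [NontriviallyNormedField 𝕜] [NormedAddCommGroup E] [NormedSpace 𝕜 E]
  [NormedAddCommGroup F] [NormedSpace 𝕜 F] {f : E → F} {p : FormalMultilinearSeries 𝕜 E F}
  {x : E} {m : ℕ}

theorem eventuallyEq_zero_of_apply_diag_eq_zero (hp : HasFPowerSeriesAt f p x)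
    (h : ∀ n y, p n (fun _ => y) = 0) : f =ᶠ[𝓝 x] 0 := by
  filter_upwards [hp.eventually_hasSum_sub] with z hz
  simp only [h] at hz
  exact hz.unique hasSum_zero

theorem exists_first_apply_diag_ne_zero (hp : HasFPowerSeriesAt f p x) (hf : ¬f =ᶠ[𝓝 x] 0)
    (hx : f x = 0) :
    ∃ n, (∃ y, p (n + 1) (fun _ => y) ≠ 0) ∧ ∀ k < n + 1, ∀ y, p k (fun _ => y) = 0 := by
  classical
  have hex : ∃ m, ∃ y, p m (fun _ => y) ≠ 0 := by
    by_contra! h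
    exact hf (hp.eventuallyEq_zero_of_apply_diag_eq_zero h)
  obtain ⟨n, hn⟩ : ∃ n, Nat.find hex = n + 1 := by
    refine Nat.exists_eq_add_one_of_ne_zero fun h0 => ?_
    obtain ⟨y, hy⟩ := (Nat.find_eq_zero hex).1 h0
    exact hy (by rw [hp.coeff_zero, hx])
  refine ⟨n, hn ▸ Nat.find_spec hex, fun k hk y => ?_⟩
  by_contra hy
  exact Nat.find_min hex (hn ▸ hk) ⟨y, hy⟩

theorem isBigO_pow_of_apply_diag_eq_zero (hp : HasFPowerSeriesAt f p x)
    (h : ∀ k < m, ∀ y, p k (fun _ => y) = 0) :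
    (fun y => f (x + y)) =O[𝓝 0] fun y => ‖y‖ ^ m := by
  simpa [p.partialSum_eq_zero_of_apply_diag_eq_zero h] using hp.isBigO_sub_partialSum_pow m

theorem isBigO_sub_apply_diag (hp : HasFPowerSeriesAt f p x)
    (h : ∀ k < m, ∀ y, p k (fun _ => y) = 0) :
    (fun y => f (x + y) - p m fun _ => y) =O[𝓝 0] fun y => ‖y‖ ^ (m + 1) := by
  simpa [FormalMultilinearSeries.partialSum_succ, p.partialSum_eq_zero_of_apply_diag_eq_zero h]
    using hp.isBigO_sub_partialSum_pow (m + 1)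

theorem isBigO_fderiv_sub_derivSeries [CompleteSpace F] {n : ℕ} (hp : HasFPowerSeriesAt f p x)
    (h : ∀ k < n, ∀ y, p (k + 1) (fun _ => y) = 0) :
    (fun y => fderiv 𝕜 f (x + y) - p.derivSeries n fun _ => y) =O[𝓝 0]
      fun y => ‖y‖ ^ (n + 1) := by
  obtain ⟨r, hr⟩ := hp
  have hlow : ∀ k < n, ∀ y : E, p.derivSeries k (fun _ => y) = 0 := fun k hk y => by
    rw [← p.fderiv_apply_diag]
    simp [h k hk]
  simpa [FormalMultilinearSeries.partialSum_succ,
    p.derivSeries.partialSum_eq_zero_of_apply_diag_eq_zero hlow]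
    using hr.fderiv.hasFPowerSeriesAt.isBigO_sub_partialSum_pow (n + 1)

end HasFPowerSeriesAt

theorem Asymptotics.IsEquivalent.eventually_ne_zero {α β : Type*} [NormedField β] {u v : α → β}
    {l : Filter α} (h : u ~[l] v) (hv : ∀ᶠ x in l, v x ≠ 0) : ∀ᶠ x in l, u x ≠ 0 := by
  obtain ⟨φ, hφ, huv⟩ := h.exists_eq_mul
  filter_upwards [huv, hφ.eventually_ne one_ne_zero, hv] with x hx hφx hvx
  rw [hx, Pi.mul_apply]
  exact mul_ne_zero hφx hvx

theorem eventually_ne_zero_of_isBigO_sub_mul_pow {𝕜 : Type*} [NormedField 𝕜] {u : 𝕜 → 𝕜}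
    {z₀ C : 𝕜} {m : ℕ} (hC : C ≠ 0)
    (h : (fun z => u z - C * (z - z₀) ^ m) =O[𝓝 z₀] fun z => ‖z - z₀‖ ^ (m + 1)) :
    ∀ᶠ z in 𝓝[≠] z₀, u z ≠ 0 := by
  have hlittle : (fun z => ‖z - z₀‖ ^ (m + 1)) =o[𝓝 z₀] fun z => C * (z - z₀) ^ m := by
    have ht : Tendsto (fun z => z - z₀) (𝓝 z₀) (𝓝 0) := tendsto_sub_nhds_zero_iff.2 tendsto_id
    simpa [isLittleO_const_mul_right_iff hC, Function.comp_def] using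
      ((isLittleO_pow_pow (𝕜 := 𝕜) (Nat.lt_succ_self m)).comp_tendsto ht).norm_left
  have hequiv : u ~[𝓝[≠] z₀] fun z => C * (z - z₀) ^ m :=
    (h.trans_isLittleO hlittle).mono nhdsWithin_le_nhds
  exact hequiv.eventually_ne_zero (eventually_nhdsWithin_of_forall fun z hz =>
    mul_ne_zero hC (pow_ne_zero _ (sub_ne_zero.2 hz)))

section Wirtinger

open Complex

noncomputable def dbarCLM : (ℂ →L[ℝ] ℂ) →L[ℝ] ℂ :=
  (2⁻¹ : ℂ) • (ContinuousLinearMap.apply ℝ ℂ 1 + I • ContinuousLinearMap.apply ℝ ℂ I)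

theorem dbar_eq_dbarCLM_fderiv (u : ℂ → ℂ) (z : ℂ) : dbar u z = dbarCLM (fderiv ℝ u z) := by
  simp only [dbar, dbarCLM, smul_apply, add_apply, ContinuousLinearMap.apply_apply, smul_eq_mul]
  ring

variable {u : ℂ → ℂ} {z₀ : ℂ}

theorem DifferentiableAt.complex_of_dbar_eq_zero (hd : DifferentiableAt ℝ u z₀)
    (h : dbar u z₀ = 0) : DifferentiableAt ℂ u z₀ := by
  refine differentiableAt_complex_iff_differentiableAt_real.2 ⟨hd, ?_⟩
  rw [dbar] at h
  rw [smul_eq_mul]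
  linear_combination (-2 * I) * h + fderiv ℝ u z₀ I * I_sq

theorem isBigO_dbar_of_eq {a b : ℂ → ℂ} (ha : ContinuousAt a z₀) (hb : ContinuousAt b z₀)
    (heq : ∀ᶠ z in 𝓝 z₀, dbar u z + a z * u z + b z * (starRingEnd ℂ) (u z) = 0) :
    dbar u =O[𝓝 z₀] u := by
  have hau : (fun z => a z * u z) =O[𝓝 z₀] u := by
    simpa using (ha.isBigO_one ℂ).mul (isBigO_refl u (𝓝 z₀))
  have hbu : (fun z => b z * (starRingEnd ℂ) (u z)) =O[𝓝 z₀] u := by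
    simpa using (hb.isBigO_one ℂ).mul
      (isBigO_of_le (𝓝 z₀) (f := fun z => (starRingEnd ℂ) (u z)) fun z => (RCLike.norm_conj _).le)
  refine (hau.add hbu).neg_left.congr' (heq.mono fun z hz => ?_) EventuallyEq.rfl
  linear_combination -hz

theorem ContinuousMultilinearMap.apply_diag_eq_mul_pow {m : ℕ} (M : ℂ [×m]→L[ℝ] ℂ)
    (hM : Differentiable ℂ fun y => M fun _ => y) (y : ℂ) :
    (M fun _ => y) = (M fun _ => 1) * y ^ m := by
  have hreal : ∀ t : ℝ, (M fun _ => (t : ℂ)) - (M fun _ => 1) * (t : ℂ) ^ m = 0 := fun t => by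
    have := M.map_smul_univ (fun _ => t) fun _ => (1 : ℂ)
    simp only [Finset.prod_const, Finset.card_univ, Fintype.card_fin, Complex.real_smul,
      mul_one] at this
    rw [this]
    push_cast
    ring
  have hofReal : Tendsto ((↑) : ℝ → ℂ) (𝓝[≠] 0) (𝓝[≠] 0) :=
    tendsto_nhdsWithin_of_tendsto_nhds_of_eventually_within _
      ((continuous_ofReal.tendsto' 0 0 ofReal_zero).mono_left nhdsWithin_le_nhds)
      (eventually_nhdsWithin_of_forall fun t ht => ofReal_ne_zero.2 ht)
  have hanalytic : AnalyticOnNhd ℂ (fun y => (M fun _ => y) - (M fun _ => 1) * y ^ m) Set.univ :=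
    fun z _ => (hM.sub (by fun_prop)).analyticAt z
  exact sub_eq_zero.1 <| hanalytic.eqOn_zero_of_preconnected_of_frequently_eq_zero
    isPreconnected_univ (Set.mem_univ 0) (hofReal.frequently (Frequently.of_forall hreal))
    (Set.mem_univ y)

theorem HasFPowerSeriesAt.apply_diag_eq_mul_pow_of_isBigO_dbar
    {p : FormalMultilinearSeries ℝ ℂ ℂ} {n : ℕ} (hp : HasFPowerSeriesAt u p z₀)
    (hdbar : dbar u =O[𝓝 z₀] u) (h : ∀ k < n + 1, ∀ y, p k (fun _ => y) = 0) (y : ℂ) :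
    (p (n + 1) fun _ => y) = (p (n + 1) fun _ => 1) * y ^ (n + 1) := by
  have htrans : Tendsto (z₀ + ·) (𝓝 0) (𝓝 z₀) := by
    simpa using (continuous_const_add z₀).tendsto 0
  have hdbar_pow : (fun y => dbar u (z₀ + y)) =O[𝓝 0] fun y => ‖y‖ ^ (n + 1) :=
    (hdbar.comp_tendsto htrans).trans (hp.isBigO_pow_of_apply_diag_eq_zero h)
  have hdbar_sub : (fun y => dbar u (z₀ + y) - dbarCLM (p.derivSeries n fun _ => y)) =O[𝓝 0]
      fun y => ‖y‖ ^ (n + 1) := by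
    simpa only [dbar_eq_dbarCLM_fderiv, ← map_sub] using (dbarCLM.isBigO_comp _ _).trans
      (hp.isBigO_fderiv_sub_derivSeries fun k hk => h (k + 1) (by omega))
  have hdbar_P : ∀ y, dbarCLM (p.derivSeries n fun _ => y) = 0 := by
    have : (fun y => dbarCLM.compContinuousMultilinearMap (p.derivSeries n) fun _ => y) =O[𝓝 0]
        fun y => ‖y‖ ^ (n + 1) := by
      simpa using hdbar_pow.sub hdbar_sub
    exact this.continuousMultilinearMap_apply_eq_zero
  have hP : Differentiable ℂ fun y => p (n + 1) fun _ => y := fun y =>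
    DifferentiableAt.complex_of_dbar_eq_zero
      (((p (n + 1)).contDiff.differentiable one_ne_zero).comp
        (differentiable_pi.2 fun _ => differentiable_id) y)
      (by rw [dbar_eq_dbarCLM_fderiv, p.fderiv_apply_diag, hdbar_P])
  exact (p (n + 1)).apply_diag_eq_mul_pow hP y

end Wirtinger

/-- Let `u` be real-analytic on an open connected `Ω ⊂ ℂ` and satisfy
`∂u/∂z̄ + a u + b conj u = 0` with `a, b` real-analytic.  If `u` is not identically `0`
and `u(z₀) = 0`, then there are `m ≥ 1` and `C ≠ 0` with
`u(z) = C (z − z₀)^m + O(|z − z₀|^{m+1})`; in particular `z₀` is an isolated zero. -/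
theorem modified_CR_taylor_expansion_at_zero
    (Ω : Set ℂ) (hΩ : IsOpen Ω) (hconn : IsConnected Ω)
    (a b u : ℂ → ℂ)
    (ha : AnalyticOnNhd ℝ a Ω) (hb : AnalyticOnNhd ℝ b Ω) (hu : AnalyticOnNhd ℝ u Ω)
    (heq : ∀ z ∈ Ω, dbar u z + a z * u z + b z * (starRingEnd ℂ) (u z) = 0)
    (hne : ∃ z ∈ Ω, u z ≠ 0)
    (z₀ : ℂ) (hz₀ : z₀ ∈ Ω) (hu0 : u z₀ = 0) :
    ∃ (m : ℕ) (C : ℂ), 1 ≤ m ∧ C ≠ 0 ∧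
      (fun z => u z - C * (z - z₀) ^ m) =O[𝓝 z₀] (fun z => ‖z - z₀‖ ^ (m + 1)) ∧
      ∃ ε > 0, ∀ w : ℂ, w ≠ z₀ → dist w z₀ < ε → u w ≠ 0 := by
  obtain ⟨p, hp⟩ := hu z₀ hz₀
  have hnontriv : ¬u =ᶠ[𝓝 z₀] 0 := fun h => by
    obtain ⟨z, hz, hz0⟩ := hne
    exact hz0 (hu.eqOn_zero_of_preconnected_of_eventuallyEq_zero hconn.isPreconnected hz₀ h hz)
  obtain ⟨n, ⟨y, hy⟩, hlow⟩ := hp.exists_first_apply_diag_ne_zero hnontriv hu0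
  have hdbar : dbar u =O[𝓝 z₀] u := isBigO_dbar_of_eq (ha z₀ hz₀).continuousAt
    (hb z₀ hz₀).continuousAt (eventually_of_mem (hΩ.mem_nhds hz₀) heq)
  set C := p (n + 1) fun _ => 1
  have hP : ∀ y, (p (n + 1) fun _ => y) = C * y ^ (n + 1) :=
    hp.apply_diag_eq_mul_pow_of_isBigO_dbar hdbar hlow
  have hC : C ≠ 0 := fun h0 => hy (by rw [hP, h0, zero_mul])
  have hexp : (fun z => u z - C * (z - z₀) ^ (n + 1)) =O[𝓝 z₀]
      fun z => ‖z - z₀‖ ^ (n + 1 + 1) := by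
    simpa [Function.comp_def, hP] using (hp.isBigO_sub_apply_diag hlow).comp_tendsto
      (tendsto_sub_nhds_zero_iff.2 (tendsto_id (x := 𝓝 z₀)))
  refine ⟨n + 1, C, by omega, hC, hexp, ?_⟩
  obtain ⟨ε, hε, hball⟩ := Metric.eventually_nhds_iff.1
    (eventually_nhdsWithin_iff.1 (eventually_ne_zero_of_isBigO_sub_mul_pow hC hexp))
  exact ⟨ε, hε, fun w hw hdist => hball hdist hw⟩
end

section
/- Let Φ be a C¹ strictly plurisubharmonic function near x₀ ∈ C^n, Λ_Φ = {(x, (2/i)∂Φ/∂x(x))} the associated I-Lagrangian R-symplectic submanifold of C^{2n}, and Γ ⊂ Λ_Φ a submanifold that is Lagrangian for the restriction of the real symplectic form σ|_{Λ_Φ}. Then the projection π_x(Γ) ⊂ C^n is totally real: if u ∈ C^n is such that both u and iu are tangent to π_x(Γ) at some point x, then u = 0. -/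
/-- Let `Φ` be a smooth strictly plurisubharmonic function near a point of
`ℂⁿ`, `Λ_Φ = {(x, (2/i)∂Φ/∂x)}` the associated I-Lagrangian R-symplectic manifold, and
`Γ ⊂ Λ_Φ` a submanifold that is Lagrangian for `σ|_{Λ_Φ}` (`σ = Σ dξ_j ∧ dx_j`).
Then `π_x(Γ)` is totally real: if `u` and `iu` are both tangent to `Γ` (over the base)
at some point, then `u = 0`.  Here `p = ∂Φ/∂x` is the holomorphic gradient,
characterized by `dΦ(x)·v = 2 Re Σ p(x)_j v_j`; strict plurisubharmonicity is expressed
by positivity of `D²Φ(u,u) + D²Φ(iu,iu)` (four times the Levi form) for `u ≠ 0`;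
tangency is expressed through the tangent cone of the set `S = Γ`. -/
theorem projection_of_lagrangian_totally_real
    {n : ℕ} (U : Set (Fin n → ℂ)) (hU : IsOpen U)
    (Φ : (Fin n → ℂ) → ℝ) (hΦ : ContDiffOn ℝ (⊤ : ℕ∞) Φ U)
    (p : (Fin n → ℂ) → (Fin n → ℂ)) (hp : ContDiffOn ℝ (⊤ : ℕ∞) p U)
    (hpΦ : ∀ x ∈ U, ∀ v : Fin n → ℂ, fderiv ℝ Φ x v = 2 * (∑ j, p x j * v j).re)
    (hpsh : ∀ x ∈ U, ∀ u : Fin n → ℂ, u ≠ 0 →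
      0 < fderiv ℝ (fun y => fderiv ℝ Φ y u) x u
          + fderiv ℝ (fun y => fderiv ℝ Φ y (Complex.I • u)) x (Complex.I • u))
    (S : Set ((Fin n → ℂ) × (Fin n → ℂ)))
    (hSgraph : ∀ ρ ∈ S, ρ.1 ∈ U ∧ ρ.2 = (2 / Complex.I) • p ρ.1)
    (hLag : ∀ ρ ∈ S, ∀ V W : (Fin n → ℂ) × (Fin n → ℂ),
      V ∈ tangentConeAt ℝ S ρ → W ∈ tangentConeAt ℝ S ρ →
      (∑ j, (V.2 j * W.1 j - W.2 j * V.1 j)) = 0)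
    (ρ : (Fin n → ℂ) × (Fin n → ℂ)) (hρ : ρ ∈ S) (u : Fin n → ℂ)
    (hu : ∃ ξ : Fin n → ℂ, (u, ξ) ∈ tangentConeAt ℝ S ρ)
    (hiu : ∃ η : Fin n → ℂ, (Complex.I • u, η) ∈ tangentConeAt ℝ S ρ) :
    u = 0 := by
  classical
  by_contra hu0
  obtain ⟨hxU, -⟩ := hSgraph ρ hρ
  obtain ⟨ξ, hξ⟩ := hu
  obtain ⟨η, hη⟩ := hiu
  have hpdiff : DifferentiableAt ℝ p ρ.1 :=
    (hp.differentiableOn (by simp)).differentiableAt (hU.mem_nhds hxU)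
  set D := fderiv ℝ p ρ.1 with hD
  -- Tangent vectors to S lie on the graph of the derivative of (2/I) • p
  have key : ∀ V : (Fin n → ℂ) × (Fin n → ℂ), V ∈ tangentConeAt ℝ S ρ →
      V.2 = (2 / Complex.I) • D V.1 := by
    intro V hV
    have hF1 : HasFDerivWithinAt
        (fun q : (Fin n → ℂ) × (Fin n → ℂ) => q.2 - (2 / Complex.I) • p q.1)
        ((ContinuousLinearMap.snd ℝ (Fin n → ℂ) (Fin n → ℂ)) -
          (2 / Complex.I) • (D.comp (ContinuousLinearMap.fst ℝ (Fin n → ℂ) (Fin n → ℂ)))) S ρ := by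
      have h1 : HasFDerivAt (fun q : (Fin n → ℂ) × (Fin n → ℂ) => p q.1)
          (D.comp (ContinuousLinearMap.fst ℝ (Fin n → ℂ) (Fin n → ℂ))) ρ :=
        hpdiff.hasFDerivAt.comp ρ hasFDerivAt_fst
      have h2 : HasFDerivAt (fun q : (Fin n → ℂ) × (Fin n → ℂ) => (2 / Complex.I) • p q.1)
          ((2 / Complex.I) • (D.comp (ContinuousLinearMap.fst ℝ (Fin n → ℂ) (Fin n → ℂ)))) ρ :=
        h1.const_smul (2 / Complex.I)
      exact ((hasFDerivAt_snd.sub h2)).hasFDerivWithinAt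
    have hF0 : HasFDerivWithinAt
        (fun q : (Fin n → ℂ) × (Fin n → ℂ) => q.2 - (2 / Complex.I) • p q.1)
        (0 : ((Fin n → ℂ) × (Fin n → ℂ)) →L[ℝ] (Fin n → ℂ)) S ρ := by
      refine (hasFDerivWithinAt_const (0 : Fin n → ℂ) ρ S).congr (fun q hq => ?_) ?_
      · rw [(hSgraph q hq).2]; simp
      · rw [(hSgraph ρ hρ).2]; simp
    have h := hF1.unique_on hF0 hV
    have h' : V.2 - (2 / Complex.I) • D V.1 = 0 := by simpa using h
    exact sub_eq_zero.mp h'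
  -- second derivative identity
  have hsecond : ∀ v w : Fin n → ℂ,
      fderiv ℝ (fun y => fderiv ℝ Φ y v) ρ.1 w = 2 * (∑ j, v j * (D w) j).re := by
    intro v w
    set L : (Fin n → ℂ) →L[ℝ] ℂ :=
      ∑ j, v j • ((ContinuousLinearMap.proj j : (Fin n → ℂ) →L[ℂ] ℂ).restrictScalars ℝ) with hL
    have hLapp : ∀ q : Fin n → ℂ, L q = ∑ j, v j * q j := by
      intro q
      simp [hL, ContinuousLinearMap.sum_apply]
    have hA : HasFDerivAt (fun y => L (p y)) (L.comp D) ρ.1 :=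
      L.hasFDerivAt.comp ρ.1 hpdiff.hasFDerivAt
    have h1 : HasFDerivAt (fun y => (L (p y)).re)
        (Complex.reCLM.comp (L.comp D)) ρ.1 := Complex.reCLM.hasFDerivAt.comp ρ.1 hA
    have hg : HasFDerivAt (fun y => 2 * (L (p y)).re)
        ((2:ℝ) • (Complex.reCLM.comp (L.comp D))) ρ.1 := h1.const_mul 2
    have heq : fderiv ℝ (fun y => fderiv ℝ Φ y v) ρ.1
        = fderiv ℝ (fun y => 2 * (L (p y)).re) ρ.1 := by
      apply Filter.EventuallyEq.fderiv_eq
      filter_upwards [hU.mem_nhds hxU] with y hy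
      rw [hpΦ y hy v, hLapp]
      congr 2
      exact Finset.sum_congr rfl fun j _ => mul_comm _ _
    rw [heq, hg.fderiv]
    simp [hLapp]
  -- the two complex quantities
  set A1 : ℂ := ∑ j, u j * (D u) j with hA1
  set A2 : ℂ := ∑ j, u j * (D (Complex.I • u)) j with hA2
  -- Lagrangian condition gives 2*A1 + 2*I*A2 = 0
  have hξval : ξ = (2 / Complex.I) • D u := by
    have := key (u, ξ) hξ; simpa using this
  have hηval : η = (2 / Complex.I) • D (Complex.I • u) := by
    have := key (Complex.I • u, η) hη; simpa using this
  have hT : (2:ℂ) * A1 + 2 * Complex.I * A2 = 0 := by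
    have h0 := hLag ρ hρ (u, ξ) (Complex.I • u, η) hξ hη
    rw [← h0, hA1, hA2]
    simp only [hξval, hηval, Pi.smul_apply, smul_eq_mul, Finset.mul_sum,
      ← Finset.sum_sub_distrib, ← Finset.sum_add_distrib]
    refine Finset.sum_congr rfl fun j _ => ?_
    have hI : Complex.I ≠ 0 := Complex.I_ne_zero
    field_simp
    ring_nf
    simp [Complex.I_sq]
    ring
  -- positivity
  have hpos := hpsh ρ.1 hxU u hu0
  rw [hsecond u u, hsecond (Complex.I • u) (Complex.I • u)] at hpos
  have hA2' : ∑ j, (Complex.I • u) j * (D (Complex.I • u)) j = Complex.I * A2 := by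
    rw [hA2, Finset.mul_sum]
    exact Finset.sum_congr rfl fun j _ => by simp; ring
  rw [hA2', ← hA1] at hpos
  have e1 : ((2:ℂ) * A1 + 2 * Complex.I * A2).re = 2 * A1.re + 2 * (Complex.I * A2).re := by
    simp [Complex.add_re, Complex.mul_re, Complex.mul_im]
  rw [hT] at e1
  simp only [Complex.zero_re] at e1
  linarith
end
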